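/- arXiv:2111.07461 — 3 statements merged into one kernel-verified Lean document; each statement's English description precedes it below -/
import Mathlib

section
/- Let H be a Heyting algebra with ⊥ ≠ ⊤, Σ a category, and E an estimator, i.e. a function from the objects of Σ to H such that for every object w and every p ∈ H, if E w ⇨ p = ⊤ then (E w ⇨ pᶜ)ᶜ = ⊤. Then for any morphism f : w ⟶ v in Σ and any p ∈ H, if p is safe in v, then pᶜ is not safe in w. (Backward Consistency) -/
open CategoryTheory

/-- A proposition `p` in the Heyting algebra `H` is safe in the protocol state `w`
if for every execution `w ⟶ v` one has `E v ⇨ p = ⊤`. -/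
def Safe {H : Type*} [HeytingAlgebra H] {St : Type*} [Category St]
    (E : St → H) (p : H) (w : St) : Prop :=
  ∀ ⦃v : St⦄, (w ⟶ v) → E v ⇨ p = ⊤

/-- Backward Consistency: for any execution `f : w ⟶ v`, if `p` is safe in `v`,
then `pᶜ` is not safe in `w`. -/
theorem backward_consistency {H : Type*} [HeytingAlgebra H] {St : Type*} [Category St]
    (hbt : (⊥ : H) ≠ ⊤)
    (E : St → H)
    (hE : ∀ (w : St) (p : H), E w ⇨ p = ⊤ → (E w ⇨ pᶜ)ᶜ = ⊤)
    {w v : St} (f : w ⟶ v) (p : H) :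
    Safe E p v → ¬ Safe E pᶜ w := by
  intro hs hns
  have h1 : E v ⇨ p = ⊤ := hs (𝟙 v)
  have h2 : E v ⇨ pᶜ = ⊤ := hns f
  have h3 := hE v p h1
  rw [h2, compl_top] at h3
  exact hbt h3
end

section
/- Let H be a Heyting algebra with ⊥ ≠ ⊤, Σ a category, and E an estimator, i.e. a function from the objects of Σ to H such that for every object w and every p ∈ H, if E w ⇨ p = ⊤ then (E w ⇨ pᶜ)ᶜ = ⊤. If p, q ∈ H satisfy p ⊓ q = ⊥ and the states w₁ and w₂ are compatible (there exist w₃ and morphisms w₁ ⟶ w₃ and w₂ ⟶ w₃), then it is not the case that both p is safe in w₁ and q is safe in w₂. (Main safety theorem: inconsistent propositions are not both safe in compatible states) -/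
open CategoryTheory

/-- Main safety theorem: inconsistent propositions (`p ⊓ q = ⊥`) are not both safe
in compatible states (states having a common future state). -/
theorem estimate_safety {H : Type*} [HeytingAlgebra H] {St : Type*} [Category St]
    (hbt : (⊥ : H) ≠ ⊤)
    (E : St → H)
    (hE : ∀ (w : St) (p : H), E w ⇨ p = ⊤ → (E w ⇨ pᶜ)ᶜ = ⊤)
    (p q : H) (hpq : p ⊓ q = ⊥)
    {w₁ w₂ : St} (hcompat : ∃ (w₃ : St), Nonempty (w₁ ⟶ w₃) ∧ Nonempty (w₂ ⟶ w₃)) :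
    ¬ (Safe E p w₁ ∧ Safe E q w₂) := by
  rintro ⟨hs1, hs2⟩
  obtain ⟨w₃, ⟨f⟩, ⟨g⟩⟩ := hcompat
  have h1 : E w₃ ≤ p := himp_eq_top_iff.1 (hs1 f)
  have h2 : E w₃ ≤ q := himp_eq_top_iff.1 (hs2 g)
  have hle : E w₃ ≤ pᶜ := by
    have : E w₃ ≤ ⊥ := hpq ▸ le_inf h1 h2
    exact this.trans bot_le
  have htop : E w₃ ⇨ pᶜ = ⊤ := eq_top_iff.2 (le_himp_iff.2 (by simpa using hle))
  have := hE w₃ p (hs1 f)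
  rw [htop] at this
  simp at this
  exact hbt this
end

section
/- Let H be a Heyting algebra with ⊥ ≠ ⊤, Σ a category, and E an estimator, i.e. a function from the objects of Σ to H such that for every object w and every p ∈ H, if E w ⇨ p = ⊤ then (E w ⇨ pᶜ)ᶜ = ⊤. If the states w₁ and w₂ are compatible (there exist w₃ and morphisms w₁ ⟶ w₃ and w₂ ⟶ w₃), then for any p ∈ H it is not the case that both p is safe in w₁ and pᶜ is safe in w₂. (A proposition and its negation are not both safe in compatible states) -/
open CategoryTheory

/-- A proposition and its pseudocomplement are not both safe in compatible states. -/
theorem safety_neg {H : Type*} [HeytingAlgebra H] {St : Type*} [Category St]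
    (hbt : (⊥ : H) ≠ ⊤)
    (E : St → H)
    (hE : ∀ (w : St) (p : H), E w ⇨ p = ⊤ → (E w ⇨ pᶜ)ᶜ = ⊤)
    {w₁ w₂ : St} (hcompat : ∃ (w₃ : St), Nonempty (w₁ ⟶ w₃) ∧ Nonempty (w₂ ⟶ w₃))
    (p : H) :
    ¬ (Safe E p w₁ ∧ Safe E pᶜ w₂) := by
  rintro ⟨h1, h2⟩
  obtain ⟨w₃, ⟨f⟩, ⟨g⟩⟩ := hcompat
  have e1 := hE w₃ p (h1 f)
  rw [h2 g] at e1
  simp at e1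
  exact hbt e1.symm.symm
end
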